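/- (Ito–Tanabe–Terwilliger) Let (X,R) be a metric and cometric symmetric association scheme, x ∈ X, and W ⊆ V an irreducible T(x)-module with endpoint r, dual endpoint r^*, and diameter d. For 0 ≤ i, j ≤ d define W_{ij} = (Σ_{k=0}^{i} E_{r+k}^* W) ∩ (Σ_{ℓ=j}^{d} E_{r^*+ℓ} W) and W_{ij}^* = (Σ_{ℓ=0}^{i} E_{r^*+ℓ} W) ∩ (Σ_{k=j}^{d} E_{r+k}^* W). Then W_{ij} = 0 and W_{ij}^* = 0 whenever i < j. -/

import Mathlib

open Matrix

noncomputable section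

/-- The standard Hermitian dot product on `X → ℂ` (conjugation on the second argument). -/
def dotc {X : Type*} [Fintype X] (u v : X → ℂ) : ℂ := ∑ y, u y * (starRingEnd ℂ) (v y)

/-- The characteristic vector `x̂` of a vertex. -/
def xhat {X : Type*} [DecidableEq X] (x : X) : X → ℂ := Pi.single x 1

/-- The characteristic vector of a subset. -/
def chiv {X : Type*} [DecidableEq X] (Y : Finset X) : X → ℂ := fun y => if y ∈ Y then 1 else 0

/-- A symmetric association scheme with `D` classes on a finite vertex set `X`,
presented by its associate matrices `A 0 = I, A 1, …, A D` and its primitive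
idempotents `E 0 = |X|⁻¹ J, E 1, …, E D`. -/
structure AssocScheme (X : Type*) [Fintype X] [DecidableEq X] (D : ℕ) where
  A : Fin (D + 1) → Matrix X X ℂ
  E : Fin (D + 1) → Matrix X X ℂ
  A_zero : A 0 = 1
  A_symm : ∀ i, (A i).IsSymm
  A_entries : ∀ i x y, A i x y = 0 ∨ A i x y = 1
  A_sum : ∑ i, A i = Matrix.of fun _ _ => (1 : ℂ)
  A_mul_closed : ∀ i j, ∃ p : Fin (D + 1) → ℂ, A i * A j = ∑ k, p k • A k
  A_comm : ∀ i j, A i * A j = A j * A i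
  E_idem : ∀ i j, E i * E j = if i = j then E i else 0
  E_sum : ∑ j, E j = 1
  E_zero : E 0 = (Fintype.card X : ℂ)⁻¹ • Matrix.of fun _ _ => (1 : ℂ)
  E_in_A : ∀ j, ∃ q : Fin (D + 1) → ℂ, E j = ∑ i, q i • A i
  A_in_E : ∀ i, ∃ q : Fin (D + 1) → ℂ, A i = ∑ j, q j • E j

namespace AssocScheme

variable {X : Type*} [Fintype X] [DecidableEq X] {D : ℕ}

/-- The associate matrices, reindexed by `ℕ` (zero outside `0,…,D`). -/
def AM (S : AssocScheme X D) (i : ℕ) : Matrix X X ℂ :=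
  if h : i < D + 1 then S.A ⟨i, h⟩ else 0

/-- The primitive idempotents, reindexed by `ℕ` (zero outside `0,…,D`). -/
def EM (S : AssocScheme X D) (j : ℕ) : Matrix X X ℂ :=
  if h : j < D + 1 then S.E ⟨j, h⟩ else 0

/-- The dual idempotent `E_i^*(x)`: the diagonal matrix with `(y,y)`-entry `(A_i)_{x y}`. -/
def Estar (S : AssocScheme X D) (x : X) (i : ℕ) : Matrix X X ℂ :=
  Matrix.diagonal fun y => S.AM i x y

/-- The dual associate matrix `A_j^*(x)`: diagonal with `(y,y)`-entry `|X| (E_j)_{x y}`. -/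
def Astar (S : AssocScheme X D) (x : X) (j : ℕ) : Matrix X X ℂ :=
  Matrix.diagonal fun y => (Fintype.card X : ℂ) * S.EM j x y

/-- The subspace `E_i^*(x) V`. -/
def EstarSp (S : AssocScheme X D) (x : X) (i : ℕ) : Submodule ℂ (X → ℂ) :=
  LinearMap.range (S.Estar x i).mulVecLin

/-- The subspace `E_j V`. -/
def ESp (S : AssocScheme X D) (j : ℕ) : Submodule ℂ (X → ℂ) :=
  LinearMap.range (S.EM j).mulVecLin

/-- The scheme is metric (P-polynomial) w.r.t. the ordering `A 0, …, A D`: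
`A 1` generates the Bose–Mesner algebra, and left multiplication by `A 1` acts
tridiagonally on the dual decomposition `V = ⊕ᵢ E_i^*(x) V` for each base vertex. -/
def IsMetric (S : AssocScheme X D) : Prop :=
  (∀ i, S.A i ∈ Algebra.adjoin ℂ {S.A 1}) ∧
  ∀ (x : X) (i : ℕ) (v : X → ℂ), v ∈ S.EstarSp x i →
    (S.A 1).mulVec v ∈ S.EstarSp x (i - 1) ⊔ S.EstarSp x i ⊔ S.EstarSp x (i + 1)

/-- The scheme is cometric (Q-polynomial) w.r.t. the ordering `E 0, …, E D`:
`A_1^*(x)` generates the dual Bose–Mesner algebra and acts tridiagonally on the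
decomposition `V = ⊕ⱼ E_j V`, for each base vertex `x`. -/
def IsCometric (S : AssocScheme X D) : Prop :=
  (∀ (x : X) (j : Fin (D + 1)), S.Astar x j ∈ Algebra.adjoin ℂ {S.Astar x 1}) ∧
  ∀ (x : X) (j : ℕ) (v : X → ℂ), v ∈ S.ESp j →
    (S.Astar x 1).mulVec v ∈ S.ESp (j - 1) ⊔ S.ESp j ⊔ S.ESp (j + 1)

/-- A vector `χ` is a code if `χ ∉ E_0 V` and `χ ∉ E_0^*(z) V` for every vertex `z`. -/
def IsCode (S : AssocScheme X D) (χ : X → ℂ) : Prop :=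
  χ ∉ S.ESp 0 ∧ ∀ z : X, χ ∉ S.EstarSp z 0

/-- `δ_x(χ) = min { i ≠ 0 : E_i^*(x) χ ≠ 0 }`. -/
def deltaX (S : AssocScheme X D) (x : X) (χ : X → ℂ) : ℕ :=
  sInf {i : ℕ | i ≠ 0 ∧ (S.Estar x i).mulVec χ ≠ 0}

/-- `s_x(χ) = #{ i ≠ 0 : E_i^*(x) χ ≠ 0 }`. -/
def sX (S : AssocScheme X D) (x : X) (χ : X → ℂ) : ℕ :=
  {i : ℕ | i ≠ 0 ∧ (S.Estar x i).mulVec χ ≠ 0}.ncard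

/-- `δ^*(χ) = min { j ≠ 0 : E_j χ ≠ 0 }` (dual distance). -/
def deltaStar (S : AssocScheme X D) (χ : X → ℂ) : ℕ :=
  sInf {j : ℕ | j ≠ 0 ∧ (S.EM j).mulVec χ ≠ 0}

/-- `s^*(χ) = #{ j ≠ 0 : E_j χ ≠ 0 }` (dual degree). -/
def sStar (S : AssocScheme X D) (χ : X → ℂ) : ℕ :=
  {j : ℕ | j ≠ 0 ∧ (S.EM j).mulVec χ ≠ 0}.ncard

/-- `δ(χ) = min { i ≠ 0 : ⟨χ, A_i χ⟩ ≠ 0 }` (minimum distance). -/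
def deltaMin (S : AssocScheme X D) (χ : X → ℂ) : ℕ :=
  sInf {i : ℕ | i ≠ 0 ∧ dotc χ ((S.AM i).mulVec χ) ≠ 0}

/-- `s(χ) = #{ i ≠ 0 : ⟨χ, A_i χ⟩ ≠ 0 }` (degree). -/
def degree (S : AssocScheme X D) (χ : X → ℂ) : ℕ :=
  {i : ℕ | i ≠ 0 ∧ dotc χ ((S.AM i).mulVec χ) ≠ 0}.ncard

/-- `ψ` is a relative `t`-codesign w.r.t. `x`: `E_i^* ψ ∈ ℂ · A_i x̂` for `1 ≤ i ≤ t`. -/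
def RelCodesign (S : AssocScheme X D) (x : X) (t : ℕ) (ψ : X → ℂ) : Prop :=
  ∀ i : ℕ, 1 ≤ i → i ≤ t → ∃ c : ℂ, (S.Estar x i).mulVec ψ = c • (S.AM i).mulVec (xhat x)

/-- `ψ` is a relative `t`-design w.r.t. `x`: `E_j ψ ∈ ℂ · E_j x̂` for `1 ≤ j ≤ t`. -/
def RelDesign (S : AssocScheme X D) (x : X) (t : ℕ) (ψ : X → ℂ) : Prop :=
  ∀ j : ℕ, 1 ≤ j → j ≤ t → ∃ c : ℂ, (S.EM j).mulVec ψ = c • (S.EM j).mulVec (xhat x)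

/-- The Terwilliger algebra `T(x)`, generated by the Bose–Mesner algebra and the
dual Bose–Mesner algebra with respect to `x`. -/
def Talg (S : AssocScheme X D) (x : X) : Subalgebra ℂ (Matrix X X ℂ) :=
  Algebra.adjoin ℂ (Set.range S.A ∪ Set.range fun i : Fin (D + 1) => S.Estar x (i : ℕ))

/-- A `T(x)`-submodule of the standard module. -/
def IsTSub (S : AssocScheme X D) (x : X) (W : Submodule ℂ (X → ℂ)) : Prop :=
  ∀ F ∈ S.Talg x, ∀ v ∈ W, F.mulVec v ∈ W

/-- An irreducible `T(x)`-module inside the standard module. -/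
def IsIrr (S : AssocScheme X D) (x : X) (W : Submodule ℂ (X → ℂ)) : Prop :=
  S.IsTSub x W ∧ W ≠ ⊥ ∧ ∀ W' ≤ W, S.IsTSub x W' → W' = ⊥ ∨ W' = W

/-- The support `W_s = { i : E_i^*(x) W ≠ 0 }` of a module. -/
def supp (S : AssocScheme X D) (x : X) (W : Submodule ℂ (X → ℂ)) : Set ℕ :=
  {i : ℕ | i ≤ D ∧ Submodule.map (S.Estar x i).mulVecLin W ≠ ⊥}

/-- The dual support `W_s^* = { j : E_j W ≠ 0 }` of a module. -/
def dualSupp (S : AssocScheme X D) (W : Submodule ℂ (X → ℂ)) : Set ℕ :=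
  {j : ℕ | j ≤ D ∧ Submodule.map (S.EM j).mulVecLin W ≠ ⊥}

/-- The endpoint `r(W) = min { i : E_i^*(x) W ≠ 0 }`. -/
def endpoint (S : AssocScheme X D) (x : X) (W : Submodule ℂ (X → ℂ)) : ℕ :=
  sInf (S.supp x W)

/-- The dual endpoint `r^*(W) = min { j : E_j W ≠ 0 }`. -/
def dualEndpoint (S : AssocScheme X D) (W : Submodule ℂ (X → ℂ)) : ℕ :=
  sInf (S.dualSupp W)

/-- The diameter `d(W) = |W_s| - 1`. -/
def diam (S : AssocScheme X D) (x : X) (W : Submodule ℂ (X → ℂ)) : ℕ :=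
  (S.supp x W).ncard - 1

/-- The dual diameter `d^*(W) = |W_s^*| - 1`. -/
def dualDiam (S : AssocScheme X D) (W : Submodule ℂ (X → ℂ)) : ℕ :=
  (S.dualSupp W).ncard - 1

/-- `W` is thin: `dim E_i^*(x) W ≤ 1` for all `i`. -/
def IsThin (S : AssocScheme X D) (x : X) (W : Submodule ℂ (X → ℂ)) : Prop :=
  ∀ i : ℕ, Module.finrank ℂ (Submodule.map (S.Estar x i).mulVecLin W) ≤ 1

/-- `W` is dual thin: `dim E_j W ≤ 1` for all `j`. -/
def IsDualThin (S : AssocScheme X D) (W : Submodule ℂ (X → ℂ)) : Prop :=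
  ∀ j : ℕ, Module.finrank ℂ (Submodule.map (S.EM j).mulVecLin W) ≤ 1

/-- The displacement `η(W) = r(W) + r^*(W) + d(W) - D` (as an integer). -/
def disp (S : AssocScheme X D) (x : X) (W : Submodule ℂ (X → ℂ)) : ℤ :=
  (S.endpoint x W : ℤ) + (S.dualEndpoint W : ℤ) + (S.diam x W : ℤ) - (D : ℤ)

/-- `V_0`: the span of the irreducible `T(x)`-modules of displacement zero. -/
def V0 (S : AssocScheme X D) (x : X) : Submodule ℂ (X → ℂ) :=
  ⨆ (W : Submodule ℂ (X → ℂ)) (_ : S.IsIrr x W ∧ S.disp x W = 0), W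

/-- The split-decomposition subspace `V_{ij} = (Σ_{k ≤ i} E_k^* V) ∩ (Σ_{ℓ ≤ j} E_ℓ V)`. -/
def Vij (S : AssocScheme X D) (x : X) (i j : ℕ) : Submodule ℂ (X → ℂ) :=
  (⨆ k ∈ Finset.range (i + 1), S.EstarSp x k) ⊓ (⨆ l ∈ Finset.range (j + 1), S.ESp l)

/-- The primary module `M x̂`. -/
def primary (S : AssocScheme X D) (x : X) : Submodule ℂ (X → ℂ) :=
  Submodule.span ℂ (Set.range fun i : Fin (D + 1) => (S.A i).mulVec (xhat x))

/-- The graph `(X, R_1)` is bipartite. -/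
def IsBipartiteGraph (S : AssocScheme X D) : Prop :=
  ∃ f : X → Bool, ∀ x y : X, S.A 1 x y ≠ 0 → f x ≠ f y

/-- `Y` is a bipartite half: one colour class of a proper 2-colouring of `(X, R_1)`. -/
def IsBipartiteHalf (S : AssocScheme X D) (Y : Finset X) : Prop :=
  ∃ f : X → Bool, (∀ x y : X, S.A 1 x y ≠ 0 → f x ≠ f y) ∧ (Y : Set X) = {x | f x = true}

/-- The scheme is antipodal: `R_0 ∪ R_D` is an equivalence relation. -/
def IsAntipodal (S : AssocScheme X D) : Prop :=
  ∀ x y z : X, y ≠ z → S.AM D x y ≠ 0 → S.AM D x z ≠ 0 → S.AM D y z ≠ 0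

/-- The scheme is an antipodal double cover: antipodal with fibres of size two. -/
def IsAntipodalDoubleCover (S : AssocScheme X D) : Prop :=
  S.IsAntipodal ∧ ∀ x : X, ∃! y : X, S.AM D x y ≠ 0

/-- The scheme is that of an ordinary cycle: the graph `(X, R_1)` has valency two. -/
def IsOrdinaryCycle (S : AssocScheme X D) : Prop :=
  ∀ x : X, {y : X | S.A 1 x y ≠ 0}.ncard = 2

end AssocScheme

namespace AssocScheme

variable {X : Type*} [Fintype X] [DecidableEq X] {D : ℕ} (S : AssocScheme X D) (x : X)

private lemma sum01 {ι : Type*} (s : Finset ι) (f : ι → ℂ)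
    (h : ∀ k ∈ s, f k = 0 ∨ f k = 1) : ∃ c : ℕ, ∑ k ∈ s, f k = c := by
  classical
  induction s using Finset.cons_induction with
  | empty => exact ⟨0, by simp⟩
  | cons a s ha ih =>
    obtain ⟨c, hc⟩ := ih (fun k hk => h k (Finset.mem_cons_of_mem hk))
    rcases h a (Finset.mem_cons_self a s) with h0 | h1
    · exact ⟨c, by simp [h0, hc]⟩
    · exact ⟨c + 1, by rw [Finset.sum_cons, h1, hc]; push_cast; ring⟩

lemma A_sum_entry (y : X) : ∑ i : Fin (D + 1), S.A i x y = 1 := by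
  have h := S.A_sum
  have := congrFun (congrFun (congrArg (fun M : Matrix X X ℂ => (M : X → X → ℂ)) h) x) y
  simpa [Matrix.sum_apply] using this

lemma A_entry_mul (i j : Fin (D + 1)) (y : X) :
    S.A i x y * S.A j x y = if i = j then S.A j x y else 0 := by
  split_ifs with hij
  · subst hij
    rcases S.A_entries i x y with h | h <;> rw [h] <;> ring
  · by_contra hne
    have hi : S.A i x y = 1 := by
      rcases S.A_entries i x y with h | h
      · exact absurd (by rw [h]; ring) hne
      · exact h
    have hj : S.A j x y = 1 := by
      rcases S.A_entries j x y with h | h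
      · exact absurd (by rw [h]; ring) hne
      · exact h
    have h1 : ∑ k ∈ Finset.univ.erase i, S.A k x y = 0 := by
      have h2 := Finset.add_sum_erase Finset.univ (fun k => S.A k x y) (Finset.mem_univ i)
      rw [S.A_sum_entry x y] at h2
      rw [hi] at h2
      linear_combination h2 - 1
    have hjmem : j ∈ Finset.univ.erase i := Finset.mem_erase.mpr ⟨fun h => hij h.symm, Finset.mem_univ j⟩
    have h3 := Finset.add_sum_erase _ (fun k => S.A k x y) hjmem
    rw [h1] at h3
    rw [hj] at h3
    obtain ⟨c, hc⟩ := sum01 ((Finset.univ.erase i).erase j) (fun k => S.A k x y)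
      (fun k _ => S.A_entries k x y)
    rw [hc] at h3
    have h4 : ((1 + c : ℕ) : ℂ) = 0 := by push_cast; linear_combination h3
    exact absurd (Nat.cast_eq_zero.mp h4) (by omega)

end AssocScheme
namespace AssocScheme

variable {X : Type*} [Fintype X] [DecidableEq X] {D : ℕ} (S : AssocScheme X D) (x : X)

lemma Estar_eq_zero {m : ℕ} (h : ¬ m < D + 1) : S.Estar x m = 0 := by
  unfold Estar AM
  rw [dif_neg h]
  simp

lemma EM_eq_zero {m : ℕ} (h : ¬ m < D + 1) : S.EM m = 0 := by
  unfold EM; rw [dif_neg h]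

lemma Estar_mul_Estar (a b : ℕ) :
    S.Estar x a * S.Estar x b = if a = b then S.Estar x a else 0 := by
  by_cases ha : a < D + 1
  · by_cases hb : b < D + 1
    · unfold Estar AM
      rw [Matrix.diagonal_mul_diagonal]
      rw [dif_pos ha, dif_pos hb]
      split_ifs with hab
      · subst hab
        have hfun : (fun y => S.A ⟨a, ha⟩ x y * S.A ⟨a, hb⟩ x y) = fun y => S.A ⟨a, ha⟩ x y := by
          funext y
          rcases S.A_entries ⟨a, ha⟩ x y with h | h <;> rw [h] <;> ring
        rw [hfun]
      · have hfun : (fun y => S.A ⟨a, ha⟩ x y * S.A ⟨b, hb⟩ x y) = fun _ => (0 : ℂ) := by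
          funext y
          rw [S.A_entry_mul x ⟨a, ha⟩ ⟨b, hb⟩ y, if_neg (by simp [Fin.mk.injEq, hab])]
        rw [hfun]
        simp
    · rw [S.Estar_eq_zero x hb, mul_zero, if_neg (by omega)]
  · rw [S.Estar_eq_zero x ha, zero_mul]
    split_ifs <;> rfl

lemma EM_mul_EM (a b : ℕ) :
    S.EM a * S.EM b = if a = b then S.EM a else 0 := by
  by_cases ha : a < D + 1
  · by_cases hb : b < D + 1
    · unfold EM
      rw [dif_pos ha, dif_pos hb, S.E_idem]
      by_cases hab : a = b
      · subst hab; simp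
      · rw [if_neg (by simp [Fin.mk.injEq, hab]), if_neg hab]
    · rw [S.EM_eq_zero hb, mul_zero, if_neg (by omega)]
  · rw [S.EM_eq_zero ha, zero_mul]
    split_ifs <;> rfl

lemma Estar_sum : ∑ i ∈ Finset.range (D + 1), S.Estar x i = 1 := by
  have h : ∀ i : Fin (D + 1), S.Estar x (i : ℕ) = Matrix.diagonal fun y => S.A i x y := by
    intro i
    unfold Estar AM
    rw [dif_pos i.isLt]
  rw [← Fin.sum_univ_eq_sum_range (fun i => S.Estar x i) (D + 1)]
  ext y z
  rw [Matrix.sum_apply]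
  simp only [h]
  by_cases hyz : y = z
  · subst hyz
    simp only [Matrix.diagonal_apply_eq]
    rw [S.A_sum_entry x y, Matrix.one_apply_eq]
  · simp [Matrix.diagonal_apply_ne _ hyz, Matrix.one_apply_ne hyz]


lemma EM_sum : ∑ j ∈ Finset.range (D + 1), S.EM j = 1 := by
  have h : ∀ j : Fin (D + 1), S.EM (j : ℕ) = S.E j := by
    intro j; unfold EM; rw [dif_pos j.isLt]
  rw [← Fin.sum_univ_eq_sum_range (fun j => S.EM j) (D + 1)]
  simp only [h]
  exact S.E_sum

end AssocScheme
namespace AssocScheme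

variable {X : Type*} [Fintype X] [DecidableEq X] {D : ℕ} (S : AssocScheme X D) (x : X)

lemma A_mem_Talg (i : Fin (D + 1)) : S.A i ∈ S.Talg x :=
  Algebra.subset_adjoin (Or.inl ⟨i, rfl⟩)

lemma Estar_mem_Talg (m : ℕ) : S.Estar x m ∈ S.Talg x := by
  by_cases h : m < D + 1
  · exact Algebra.subset_adjoin (Or.inr ⟨⟨m, h⟩, rfl⟩)
  · rw [S.Estar_eq_zero x h]; exact zero_mem _

lemma EM_mem_Talg (m : ℕ) : S.EM m ∈ S.Talg x := by
  by_cases h : m < D + 1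
  · obtain ⟨q, hq⟩ := S.E_in_A ⟨m, h⟩
    have : S.EM m = ∑ i, q i • S.A i := by unfold EM; rw [dif_pos h]; exact hq
    rw [this]
    exact Subalgebra.sum_mem _ fun i _ => Subalgebra.smul_mem _ (S.A_mem_Talg x i) _
  · rw [S.EM_eq_zero h]; exact zero_mem _

/-- `A_j^*(x)` as a combination of the dual idempotents. -/
lemma Astar_eq_sum (m : ℕ) :
    ∃ c : Fin (D + 1) → ℂ, S.Astar x m = ∑ i, c i • S.Estar x (i : ℕ) := by
  by_cases h : m < D + 1
  · obtain ⟨q, hq⟩ := S.E_in_A ⟨m, h⟩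
    refine ⟨fun i => (Fintype.card X : ℂ) * q i, ?_⟩
    unfold Astar Estar
    have hEM : S.EM m = S.E ⟨m, h⟩ := by unfold EM; rw [dif_pos h]
    ext y z
    rw [Matrix.sum_apply]
    by_cases hyz : y = z
    · subst hyz
      simp only [Matrix.diagonal_apply_eq, Matrix.smul_apply, smul_eq_mul]
      rw [hEM, hq]
      have : ∀ i : Fin (D + 1), S.AM (i : ℕ) x y = S.A i x y := by
        intro i; unfold AM; rw [dif_pos i.isLt]
      simp only [this]
      rw [Matrix.sum_apply]
      rw [Finset.mul_sum]
      refine Finset.sum_congr rfl fun i _ => ?_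
      simp [Matrix.smul_apply]
      ring
    · simp [Matrix.diagonal_apply_ne _ hyz]
  · refine ⟨0, ?_⟩
    unfold Astar
    rw [S.EM_eq_zero h]
    simp

lemma Astar_mem_Talg (m : ℕ) : S.Astar x m ∈ S.Talg x := by
  obtain ⟨c, hc⟩ := S.Astar_eq_sum x m
  rw [hc]
  exact Subalgebra.sum_mem _ fun i _ => Subalgebra.smul_mem _ (S.Estar_mem_Talg x _) _

/-- `E_i^*(x)` as a combination of dual associate matrices (needs `|X| ≠ 0`). -/
lemma Estar_eq_sum (hX : (Fintype.card X : ℂ) ≠ 0) (i : Fin (D + 1)) :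
    ∃ c : Fin (D + 1) → ℂ, S.Estar x (i : ℕ) = ∑ j, c j • S.Astar x (j : ℕ) := by
  obtain ⟨q, hq⟩ := S.A_in_E i
  refine ⟨fun j => q j * (Fintype.card X : ℂ)⁻¹, ?_⟩
  unfold Estar Astar
  ext y z
  rw [Matrix.sum_apply]
  by_cases hyz : y = z
  · subst hyz
    simp only [Matrix.diagonal_apply_eq, Matrix.smul_apply, smul_eq_mul]
    have hAM : S.AM (i : ℕ) x y = S.A i x y := by unfold AM; rw [dif_pos i.isLt]
    have hEMj : ∀ j : Fin (D + 1), S.EM (j : ℕ) = S.E j := by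
      intro j; unfold EM; rw [dif_pos j.isLt]
    rw [hAM, hq, Matrix.sum_apply]
    refine Finset.sum_congr rfl fun j _ => ?_
    rw [hEMj j]
    simp only [Matrix.smul_apply, smul_eq_mul]
    field_simp
  · simp [Matrix.diagonal_apply_ne _ hyz]

/-- `A 1` acts as a scalar on the range of each `E_j`. -/
lemma A1_mul_EM (m : ℕ) : ∃ c : ℂ, S.A 1 * S.EM m = c • S.EM m := by
  by_cases h : m < D + 1
  · obtain ⟨θ, hθ⟩ := S.A_in_E 1
    refine ⟨θ ⟨m, h⟩, ?_⟩
    have hEM : S.EM m = S.E ⟨m, h⟩ := by unfold EM; rw [dif_pos h]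
    rw [hEM, hθ, Finset.sum_mul]
    have : ∀ k : Fin (D + 1),
        (θ k • S.E k) * S.E ⟨m, h⟩ = if k = ⟨m, h⟩ then θ k • S.E k else 0 := by
      intro k
      rw [smul_mul_assoc, S.E_idem]
      split_ifs with hk
      · rfl
      · simp
    simp only [this]
    rw [Finset.sum_ite_eq' Finset.univ (⟨m, h⟩ : Fin (D + 1)) (fun k => θ k • S.E k)]
    simp
  · exact ⟨0, by rw [S.EM_eq_zero h]; simp⟩

/-- `A_1^*(x)` acts as a scalar on the range of each `E_i^*(x)`. -/
lemma Astar1_mul_Estar (m : ℕ) :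
    ∃ c : ℂ, S.Astar x 1 * S.Estar x m = c • S.Estar x m := by
  obtain ⟨c, hc⟩ := S.Astar_eq_sum x 1
  by_cases h : m < D + 1
  · refine ⟨c ⟨m, h⟩, ?_⟩
    rw [hc, Finset.sum_mul]
    have : ∀ i : Fin (D + 1),
        (c i • S.Estar x (i : ℕ)) * S.Estar x m
          = if i = ⟨m, h⟩ then c i • S.Estar x (i : ℕ) else 0 := by
      intro i
      rw [smul_mul_assoc, S.Estar_mul_Estar]
      by_cases h1 : (i : ℕ) = m
      · rw [if_pos h1, if_pos (Fin.ext h1)]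
      · rw [if_neg h1, if_neg (fun hh => h1 (congrArg Fin.val hh)), smul_zero]
    simp only [this]
    rw [Finset.sum_ite_eq' Finset.univ (⟨m, h⟩ : Fin (D + 1)) (fun i => c i • S.Estar x (i : ℕ))]
    simp
  · exact ⟨0, by rw [S.Estar_eq_zero x h]; simp⟩

end AssocScheme
namespace AssocScheme

private lemma sum_mulVec' {X : Type*} [Fintype X] [DecidableEq X] (s : Finset ℕ)
    (M : ℕ → Matrix X X ℂ) (z : X → ℂ) :
    (∑ m ∈ s, M m) *ᵥ z = ∑ m ∈ s, (M m) *ᵥ z := by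
  induction s using Finset.cons_induction with
  | empty => simp
  | cons a s ha ih => rw [Finset.sum_cons, Finset.sum_cons, Matrix.add_mulVec, ih]

variable {X : Type*} [Fintype X] [DecidableEq X] {D : ℕ} (S : AssocScheme X D) (x : X)
  (W : Submodule ℂ (X → ℂ))

lemma map_Talg_le (hT : S.IsTSub x W) {M : Matrix X X ℂ} (hM : M ∈ S.Talg x) :
    Submodule.map M.mulVecLin W ≤ W := by
  rintro _ ⟨w, hw, rfl⟩
  exact hT M hM w hw

/-- Projecting a vector of `W` lying in a sum of three `E^*`-eigenspaces of `V`
onto the corresponding components of `W`. -/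
lemma mem_triple_sup_Estar (hT : S.IsTSub x W) (a b c : ℕ) {z : X → ℂ} (hzW : z ∈ W)
    (hz : z ∈ S.EstarSp x a ⊔ S.EstarSp x b ⊔ S.EstarSp x c) :
    z ∈ Submodule.map (S.Estar x a).mulVecLin W ⊔ Submodule.map (S.Estar x b).mulVecLin W ⊔
      Submodule.map (S.Estar x c).mulVecLin W := by
  have hdec : z = ∑ m ∈ Finset.range (D + 1), (S.Estar x m).mulVec z := by
    rw [← sum_mulVec', S.Estar_sum x, Matrix.one_mulVec]
  rw [hdec]
  refine Submodule.sum_mem _ fun m _ => ?_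
  by_cases hm : m = a ∨ m = b ∨ m = c
  · have hmem : (S.Estar x m).mulVec z ∈ Submodule.map (S.Estar x m).mulVecLin W :=
      ⟨z, hzW, rfl⟩
    rcases hm with rfl | rfl | rfl
    · exact Submodule.mem_sup_left (Submodule.mem_sup_left hmem)
    · exact Submodule.mem_sup_left (Submodule.mem_sup_right hmem)
    · exact Submodule.mem_sup_right hmem
  · push_neg at hm
    suffices h0 : (S.Estar x m).mulVec z = 0 by rw [h0]; exact zero_mem _
    have key : ∀ n : ℕ, m ≠ n → ∀ u : X → ℂ, u ∈ S.EstarSp x n → (S.Estar x m).mulVec u = 0 := by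
      intro n hn u hu
      obtain ⟨w, rfl⟩ := hu
      rw [Matrix.mulVecLin_apply, Matrix.mulVec_mulVec, S.Estar_mul_Estar, if_neg hn,
        Matrix.zero_mulVec]
    rw [Submodule.mem_sup] at hz
    obtain ⟨u, hu, v, hv, rfl⟩ := hz
    rw [Submodule.mem_sup] at hu
    obtain ⟨p, hp, q, hq, rfl⟩ := hu
    rw [Matrix.mulVec_add, Matrix.mulVec_add, key a hm.1 p hp, key b hm.2.1 q hq,
      key c hm.2.2 v hv]
    simp

/-- Same, for the primitive idempotents. -/
lemma mem_triple_sup_EM (hT : S.IsTSub x W) (a b c : ℕ) {z : X → ℂ} (hzW : z ∈ W)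
    (hz : z ∈ S.ESp a ⊔ S.ESp b ⊔ S.ESp c) :
    z ∈ Submodule.map (S.EM a).mulVecLin W ⊔ Submodule.map (S.EM b).mulVecLin W ⊔
      Submodule.map (S.EM c).mulVecLin W := by
  have hdec : z = ∑ m ∈ Finset.range (D + 1), (S.EM m).mulVec z := by
    rw [← sum_mulVec', S.EM_sum, Matrix.one_mulVec]
  rw [hdec]
  refine Submodule.sum_mem _ fun m _ => ?_
  by_cases hm : m = a ∨ m = b ∨ m = c
  · have hmem : (S.EM m).mulVec z ∈ Submodule.map (S.EM m).mulVecLin W := ⟨z, hzW, rfl⟩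
    rcases hm with rfl | rfl | rfl
    · exact Submodule.mem_sup_left (Submodule.mem_sup_left hmem)
    · exact Submodule.mem_sup_left (Submodule.mem_sup_right hmem)
    · exact Submodule.mem_sup_right hmem
  · push_neg at hm
    suffices h0 : (S.EM m).mulVec z = 0 by rw [h0]; exact zero_mem _
    have key : ∀ n : ℕ, m ≠ n → ∀ u : X → ℂ, u ∈ S.ESp n → (S.EM m).mulVec u = 0 := by
      intro n hn u hu
      obtain ⟨w, rfl⟩ := hu
      rw [Matrix.mulVecLin_apply, Matrix.mulVec_mulVec, S.EM_mul_EM, if_neg hn,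
        Matrix.zero_mulVec]
    rw [Submodule.mem_sup] at hz
    obtain ⟨u, hu, v, hv, rfl⟩ := hz
    rw [Submodule.mem_sup] at hu
    obtain ⟨p, hp, q, hq, rfl⟩ := hu
    rw [Matrix.mulVec_add, Matrix.mulVec_add, key a hm.1 p hp, key b hm.2.1 q hq,
      key c hm.2.2 v hv]
    simp

/-- Tridiagonal action of `A 1` on the `E^*`-components of `W`. -/
lemma A1_tridiag (hT : S.IsTSub x W) (hmet : S.IsMetric) (r : ℕ)
    (hrmin : ∀ m, m < r → Submodule.map (S.Estar x m).mulVecLin W = ⊥) (k : ℕ) {v : X → ℂ}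
    (hv : v ∈ Submodule.map (S.Estar x (r + k)).mulVecLin W) :
    (S.A 1).mulVec v ∈ Submodule.map (S.Estar x (r + (k - 1))).mulVecLin W ⊔
      Submodule.map (S.Estar x (r + k)).mulVecLin W ⊔
      Submodule.map (S.Estar x (r + (k + 1))).mulVecLin W := by
  obtain ⟨w, hw, rfl⟩ := hv
  set v := (S.Estar x (r + k)).mulVecLin w with hv
  have hvW : v ∈ W := hT _ (S.Estar_mem_Talg x _) w hw
  have hAv : (S.A 1).mulVec v ∈ W := hT _ (S.A_mem_Talg x 1) v hvW
  have htri := hmet.2 x (r + k) v ⟨w, rfl⟩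
  have htrip := S.mem_triple_sup_Estar x W hT (r + k - 1) (r + k) (r + k + 1) hAv htri
  have hle1 : Submodule.map (S.Estar x (r + k - 1)).mulVecLin W ≤
      Submodule.map (S.Estar x (r + (k - 1))).mulVecLin W ⊔
      Submodule.map (S.Estar x (r + k)).mulVecLin W ⊔
      Submodule.map (S.Estar x (r + (k + 1))).mulVecLin W := by
    by_cases hkr : r + k - 1 = r + (k - 1)
    · rw [hkr]; exact le_sup_left.trans le_sup_left
    · rw [hrmin _ (by omega)]; exact bot_le
  have hfinal := sup_le (sup_le hle1 ((le_sup_right :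
      Submodule.map (S.Estar x (r + k)).mulVecLin W ≤ _).trans le_sup_left)) le_sup_right
  exact hfinal htrip

/-- Tridiagonal action of `A_1^*(x)` on the `E`-components of `W`. -/
lemma Astar1_tridiag (hT : S.IsTSub x W) (hcom : S.IsCometric) (rs : ℕ)
    (hrmin : ∀ m, m < rs → Submodule.map (S.EM m).mulVecLin W = ⊥) (k : ℕ) {v : X → ℂ}
    (hv : v ∈ Submodule.map (S.EM (rs + k)).mulVecLin W) :
    (S.Astar x 1).mulVec v ∈ Submodule.map (S.EM (rs + (k - 1))).mulVecLin W ⊔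
      Submodule.map (S.EM (rs + k)).mulVecLin W ⊔
      Submodule.map (S.EM (rs + (k + 1))).mulVecLin W := by
  obtain ⟨w, hw, rfl⟩ := hv
  set v := (S.EM (rs + k)).mulVecLin w with hv
  have hvW : v ∈ W := hT _ (S.EM_mem_Talg x _) w hw
  have hAv : (S.Astar x 1).mulVec v ∈ W := hT _ (S.Astar_mem_Talg x 1) v hvW
  have htri := hcom.2 x (rs + k) v ⟨w, rfl⟩
  have htrip := S.mem_triple_sup_EM x W hT (rs + k - 1) (rs + k) (rs + k + 1) hAv htri
  have hle1 : Submodule.map (S.EM (rs + k - 1)).mulVecLin W ≤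
      Submodule.map (S.EM (rs + (k - 1))).mulVecLin W ⊔
      Submodule.map (S.EM (rs + k)).mulVecLin W ⊔
      Submodule.map (S.EM (rs + (k + 1))).mulVecLin W := by
    by_cases hkr : rs + k - 1 = rs + (k - 1)
    · rw [hkr]; exact le_sup_left.trans le_sup_left
    · rw [hrmin _ (by omega)]; exact bot_le
  have hfinal := sup_le (sup_le hle1 ((le_sup_right :
      Submodule.map (S.EM (rs + k)).mulVecLin W ≤ _).trans le_sup_left)) le_sup_right
  exact hfinal htrip

/-- `A 1` scalar action on `E_m W`. -/
lemma A1_eigen {m : ℕ} {c : ℂ} (hc : S.A 1 * S.EM m = c • S.EM m) {v : X → ℂ}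
    (hv : v ∈ Submodule.map (S.EM m).mulVecLin W) : (S.A 1).mulVec v = c • v := by
  obtain ⟨w, hw, rfl⟩ := hv
  rw [Matrix.mulVecLin_apply, Matrix.mulVec_mulVec, hc, Matrix.smul_mulVec]

/-- `A_1^*(x)` scalar action on `E_m^*(x) W`. -/
lemma Astar1_eigen {m : ℕ} {c : ℂ} (hc : S.Astar x 1 * S.Estar x m = c • S.Estar x m) {v : X → ℂ}
    (hv : v ∈ Submodule.map (S.Estar x m).mulVecLin W) : (S.Astar x 1).mulVec v = c • v := by
  obtain ⟨w, hw, rfl⟩ := hv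
  rw [Matrix.mulVecLin_apply, Matrix.mulVec_mulVec, hc, Matrix.smul_mulVec]

end AssocScheme
namespace AssocScheme

variable {X : Type*} [Fintype X] [DecidableEq X] {D : ℕ} (S : AssocScheme X D) (x : X)
  (W : Submodule ℂ (X → ℂ))

lemma supp_nonempty (hW : W ≠ ⊥) : (S.supp x W).Nonempty := by
  obtain ⟨w, hwW, hw0⟩ := Submodule.exists_mem_ne_zero_of_ne_bot hW
  by_contra hemp
  rw [Set.not_nonempty_iff_eq_empty] at hemp
  apply hw0
  have hdec : w = ∑ m ∈ Finset.range (D + 1), (S.Estar x m).mulVec w := by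
    rw [← sum_mulVec', S.Estar_sum x, Matrix.one_mulVec]
  rw [hdec]
  refine Finset.sum_eq_zero fun m hm => ?_
  have hbot : Submodule.map (S.Estar x m).mulVecLin W = ⊥ := by
    by_contra hne
    have : m ∈ S.supp x W := ⟨by simpa [Nat.lt_succ_iff] using Finset.mem_range.mp hm, hne⟩
    rw [hemp] at this
    exact this
  have : (S.Estar x m).mulVec w ∈ Submodule.map (S.Estar x m).mulVecLin W := ⟨w, hwW, rfl⟩
  rw [hbot] at this
  exact this

lemma dualSupp_nonempty (hW : W ≠ ⊥) : (S.dualSupp W).Nonempty := by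
  obtain ⟨w, hwW, hw0⟩ := Submodule.exists_mem_ne_zero_of_ne_bot hW
  by_contra hemp
  rw [Set.not_nonempty_iff_eq_empty] at hemp
  apply hw0
  have hdec : w = ∑ m ∈ Finset.range (D + 1), (S.EM m).mulVec w := by
    rw [← sum_mulVec', S.EM_sum, Matrix.one_mulVec]
  rw [hdec]
  refine Finset.sum_eq_zero fun m hm => ?_
  have hbot : Submodule.map (S.EM m).mulVecLin W = ⊥ := by
    by_contra hne
    have : m ∈ S.dualSupp W := ⟨by simpa [Nat.lt_succ_iff] using Finset.mem_range.mp hm, hne⟩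
    rw [hemp] at this
    exact this
  have : (S.EM m).mulVec w ∈ Submodule.map (S.EM m).mulVecLin W := ⟨w, hwW, rfl⟩
  rw [hbot] at this
  exact this

lemma endpoint_min (hW : W ≠ ⊥) :
    ∀ m, m < S.endpoint x W → Submodule.map (S.Estar x m).mulVecLin W = ⊥ := by
  intro m hm
  have hr := Nat.sInf_mem (S.supp_nonempty x W hW)
  have hnot : m ∉ S.supp x W := Nat.notMem_of_lt_sInf hm
  by_contra hne
  exact hnot ⟨le_trans (le_of_lt hm) hr.1, hne⟩

lemma endpoint_mem (hW : W ≠ ⊥) :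
    Submodule.map (S.Estar x (S.endpoint x W)).mulVecLin W ≠ ⊥ :=
  (Nat.sInf_mem (S.supp_nonempty x W hW)).2

lemma dualEndpoint_min (hW : W ≠ ⊥) :
    ∀ m, m < S.dualEndpoint W → Submodule.map (S.EM m).mulVecLin W = ⊥ := by
  intro m hm
  have hr := Nat.sInf_mem (S.dualSupp_nonempty W hW)
  have hnot : m ∉ S.dualSupp W := Nat.notMem_of_lt_sInf hm
  by_contra hne
  exact hnot ⟨le_trans (le_of_lt hm) hr.1, hne⟩

lemma dualEndpoint_mem (hW : W ≠ ⊥) :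
    Submodule.map (S.EM (S.dualEndpoint W)).mulVecLin W ≠ ⊥ :=
  (Nat.sInf_mem (S.dualSupp_nonempty W hW)).2

/-- If `P` contains all `E_{r+k}^* W` then `P ⊇ W`. -/
lemma span_MS (r : ℕ)
    (hrmin : ∀ m, m < r → Submodule.map (S.Estar x m).mulVecLin W = ⊥)
    (P : Submodule ℂ (X → ℂ))
    (hP : ∀ k : ℕ, Submodule.map (S.Estar x (r + k)).mulVecLin W ≤ P) : W ≤ P := by
  intro w hw
  have hdec : w = ∑ m ∈ Finset.range (D + 1), (S.Estar x m).mulVec w := by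
    rw [← sum_mulVec', S.Estar_sum x, Matrix.one_mulVec]
  rw [hdec]
  refine Submodule.sum_mem _ fun m _ => ?_
  by_cases hm : m < r
  · have : (S.Estar x m).mulVec w ∈ Submodule.map (S.Estar x m).mulVecLin W := ⟨w, hw, rfl⟩
    rw [hrmin m hm] at this
    rw [Submodule.mem_bot] at this
    rw [this]
    exact zero_mem _
  · refine hP (m - r) ⟨w, hw, ?_⟩
    rw [Matrix.mulVecLin_apply]
    have e : r + (m - r) = m := by omega
    rw [e]

/-- If `P` contains all `E_{rs+ℓ} W` then `P ⊇ W`. -/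
lemma span_ME (rs : ℕ)
    (hrmin : ∀ m, m < rs → Submodule.map (S.EM m).mulVecLin W = ⊥)
    (P : Submodule ℂ (X → ℂ))
    (hP : ∀ k : ℕ, Submodule.map (S.EM (rs + k)).mulVecLin W ≤ P) : W ≤ P := by
  intro w hw
  have hdec : w = ∑ m ∈ Finset.range (D + 1), (S.EM m).mulVec w := by
    rw [← sum_mulVec', S.EM_sum, Matrix.one_mulVec]
  rw [hdec]
  refine Submodule.sum_mem _ fun m _ => ?_
  by_cases hm : m < rs
  · have : (S.EM m).mulVec w ∈ Submodule.map (S.EM m).mulVecLin W := ⟨w, hw, rfl⟩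
    rw [hrmin m hm] at this
    rw [Submodule.mem_bot] at this
    rw [this]
    exact zero_mem _
  · refine hP (m - rs) ⟨w, hw, ?_⟩
    rw [Matrix.mulVecLin_apply]
    have e : rs + (m - rs) = m := by omega
    rw [e]

/-- The stabilizer subalgebra of a subspace inside the matrix algebra. -/
def stab {X : Type*} [Fintype X] [DecidableEq X] (U : Submodule ℂ (X → ℂ)) :
    Subalgebra ℂ (Matrix X X ℂ) where
  carrier := {M | ∀ v ∈ U, M.mulVec v ∈ U}
  mul_mem' := by
    intro a b ha hb v hv
    rw [← Matrix.mulVec_mulVec]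
    exact ha _ (hb v hv)
  one_mem' := by
    intro v hv
    rw [Matrix.one_mulVec]
    exact hv
  add_mem' := by
    intro a b ha hb v hv
    rw [Matrix.add_mulVec]
    exact add_mem (ha v hv) (hb v hv)
  algebraMap_mem' := by
    intro c v hv
    rw [Algebra.algebraMap_eq_smul_one, Matrix.smul_mulVec, Matrix.one_mulVec]
    exact U.smul_mem c hv

lemma mem_stab {X : Type*} [Fintype X] [DecidableEq X] {U : Submodule ℂ (X → ℂ)}
    {M : Matrix X X ℂ} : M ∈ stab U ↔ ∀ v ∈ U, M.mulVec v ∈ U := Iff.rfl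

/-- If a subspace is invariant under `A 1` and `A_1^*(x)`, it is invariant under `T(x)`. -/
lemma Talg_le_stab (hmet : S.IsMetric) (hcom : S.IsCometric)
    (hX : (Fintype.card X : ℂ) ≠ 0) (U : Submodule ℂ (X → ℂ))
    (hU1 : ∀ v ∈ U, (S.A 1).mulVec v ∈ U) (hU2 : ∀ v ∈ U, (S.Astar x 1).mulVec v ∈ U) :
    S.Talg x ≤ stab U := by
  apply Algebra.adjoin_le
  rintro M (⟨i, rfl⟩ | ⟨i, rfl⟩)
  · have h1 : S.A 1 ∈ stab U := mem_stab.mpr hU1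
    have hadj : Algebra.adjoin ℂ {S.A 1} ≤ stab U :=
      Algebra.adjoin_le (Set.singleton_subset_iff.mpr h1)
    exact hadj (hmet.1 i)
  · have h2 : S.Astar x 1 ∈ stab U := mem_stab.mpr hU2
    have hadj : Algebra.adjoin ℂ {S.Astar x 1} ≤ stab U :=
      Algebra.adjoin_le (Set.singleton_subset_iff.mpr h2)
    obtain ⟨cc, hcc⟩ := S.Estar_eq_sum x hX i
    show S.Estar x (i : ℕ) ∈ stab U
    rw [hcc]
    exact Subalgebra.sum_mem _ fun j _ => Subalgebra.smul_mem _ (hadj (hcom.1 x j)) _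

end AssocScheme
namespace AssocScheme

variable {X : Type*} [Fintype X] [DecidableEq X] {D : ℕ}

/-- `Σ_{k ≤ i} E_{r+k}^*(x) W`. -/
def FF (S : AssocScheme X D) (x : X) (W : Submodule ℂ (X → ℂ)) (r i : ℕ) :
    Submodule ℂ (X → ℂ) :=
  ⨆ k ∈ Finset.range (i + 1), Submodule.map (S.Estar x (r + k)).mulVecLin W

/-- `Σ_{ℓ ≥ j} E_{rs+ℓ} W`. -/
def GG (S : AssocScheme X D) (W : Submodule ℂ (X → ℂ)) (rs j : ℕ) : Submodule ℂ (X → ℂ) :=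
  ⨆ ℓ : ℕ, ⨆ _ : j ≤ ℓ, Submodule.map (S.EM (rs + ℓ)).mulVecLin W

/-- `Σ_{ℓ ≤ i} E_{rs+ℓ} W`. -/
def FE (S : AssocScheme X D) (W : Submodule ℂ (X → ℂ)) (rs i : ℕ) : Submodule ℂ (X → ℂ) :=
  ⨆ ℓ ∈ Finset.range (i + 1), Submodule.map (S.EM (rs + ℓ)).mulVecLin W

/-- `Σ_{k ≥ j} E_{r+k}^*(x) W`. -/
def GE (S : AssocScheme X D) (x : X) (W : Submodule ℂ (X → ℂ)) (r j : ℕ) :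
    Submodule ℂ (X → ℂ) :=
  ⨆ k : ℕ, ⨆ _ : j ≤ k, Submodule.map (S.Estar x (r + k)).mulVecLin W

variable (S : AssocScheme X D) (x : X) (W : Submodule ℂ (X → ℂ)) (r rs : ℕ)

lemma MS_le_FF {k i : ℕ} (hk : k ≤ i) :
    Submodule.map (S.Estar x (r + k)).mulVecLin W ≤ FF S x W r i :=
  le_iSup₂_of_le k (Finset.mem_range.mpr (by omega)) le_rfl

lemma ME_le_GG {ℓ j : ℕ} (hℓ : j ≤ ℓ) :
    Submodule.map (S.EM (rs + ℓ)).mulVecLin W ≤ GG S W rs j :=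
  le_iSup_of_le ℓ (le_iSup_of_le hℓ le_rfl)

lemma ME_le_FE {ℓ i : ℕ} (hℓ : ℓ ≤ i) :
    Submodule.map (S.EM (rs + ℓ)).mulVecLin W ≤ FE S W rs i :=
  le_iSup₂_of_le ℓ (Finset.mem_range.mpr (by omega)) le_rfl

lemma MS_le_GE {k j : ℕ} (hk : j ≤ k) :
    Submodule.map (S.Estar x (r + k)).mulVecLin W ≤ GE S x W r j :=
  le_iSup_of_le k (le_iSup_of_le hk le_rfl)

lemma FF_mono {i i' : ℕ} (h : i ≤ i') : FF S x W r i ≤ FF S x W r i' :=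
  iSup₂_le fun k hk => S.MS_le_FF x W r (by have := Finset.mem_range.mp hk; omega)

lemma GG_anti {j j' : ℕ} (h : j ≤ j') : GG S W rs j' ≤ GG S W rs j :=
  iSup_le fun ℓ => iSup_le fun hℓ => S.ME_le_GG W rs (le_trans h hℓ)

lemma FE_mono {i i' : ℕ} (h : i ≤ i') : FE S W rs i ≤ FE S W rs i' :=
  iSup₂_le fun ℓ hℓ => S.ME_le_FE W rs (by have := Finset.mem_range.mp hℓ; omega)

lemma GE_anti {j j' : ℕ} (h : j ≤ j') : GE S x W r j' ≤ GE S x W r j :=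
  iSup_le fun k => iSup_le fun hk => S.MS_le_GE x W r (le_trans h hk)

lemma FF_le_W (hT : S.IsTSub x W) (i : ℕ) : FF S x W r i ≤ W :=
  iSup₂_le fun k _ => S.map_Talg_le x W hT (S.Estar_mem_Talg x _)

lemma GG_le_W (hT : S.IsTSub x W) (j : ℕ) : GG S W rs j ≤ W :=
  iSup_le fun ℓ => iSup_le fun _ => S.map_Talg_le x W hT (S.EM_mem_Talg x _)

lemma FE_le_W (hT : S.IsTSub x W) (i : ℕ) : FE S W rs i ≤ W :=
  iSup₂_le fun ℓ _ => S.map_Talg_le x W hT (S.EM_mem_Talg x _)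

lemma GE_le_W (hT : S.IsTSub x W) (j : ℕ) : GE S x W r j ≤ W :=
  iSup_le fun k => iSup_le fun _ => S.map_Talg_le x W hT (S.Estar_mem_Talg x _)

/-- Complementarity of the two pure `E^*`-filtrations. -/
lemma compl_star (i : ℕ) : FF S x W r i ⊓ GE S x W r (i + 1) = ⊥ := by
  set P : Matrix X X ℂ := ∑ k ∈ Finset.range (i + 1), S.Estar x (r + k) with hP
  have hmul : ∀ (a : X → ℂ) (k : ℕ), P *ᵥ ((S.Estar x (r + k)) *ᵥ a) =
      if k ≤ i then (S.Estar x (r + k)) *ᵥ a else 0 := by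
    intro a k
    rw [hP, sum_mulVec']
    have step : ∀ k' ∈ Finset.range (i + 1),
        (S.Estar x (r + k')) *ᵥ ((S.Estar x (r + k)) *ᵥ a)
          = if k' = k then (S.Estar x (r + k)) *ᵥ a else 0 := by
      intro k' _
      rw [Matrix.mulVec_mulVec, S.Estar_mul_Estar]
      by_cases hkk : k' = k
      · subst hkk
        rw [if_pos rfl, if_pos rfl]
      · rw [if_neg (by omega), if_neg hkk, Matrix.zero_mulVec]
    rw [Finset.sum_congr rfl step, Finset.sum_ite_eq' (Finset.range (i + 1)) k]
    by_cases hk : k ≤ i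
    · rw [if_pos (Finset.mem_range.mpr (by omega)), if_pos hk]
    · rw [if_neg (by simp [Finset.mem_range]; omega), if_neg hk]
  have h1 : ∀ v ∈ FF S x W r i, P *ᵥ v = v := by
    intro v hv
    have : FF S x W r i ≤ LinearMap.ker (P.mulVecLin - LinearMap.id) := by
      refine iSup₂_le fun k hk => ?_
      rintro _ ⟨w, hw, rfl⟩
      rw [LinearMap.mem_ker, LinearMap.sub_apply, LinearMap.id_apply, sub_eq_zero,
        Matrix.mulVecLin_apply, Matrix.mulVecLin_apply, hmul,
        if_pos (by have := Finset.mem_range.mp hk; omega)]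
    have h := this hv
    rw [LinearMap.mem_ker, LinearMap.sub_apply, LinearMap.id_apply, sub_eq_zero,
      Matrix.mulVecLin_apply] at h
    exact h
  have h2 : ∀ v ∈ GE S x W r (i + 1), P *ᵥ v = 0 := by
    intro v hv
    have : GE S x W r (i + 1) ≤ LinearMap.ker P.mulVecLin := by
      refine iSup_le fun k => iSup_le fun hk => ?_
      rintro _ ⟨w, hw, rfl⟩
      rw [LinearMap.mem_ker, Matrix.mulVecLin_apply, Matrix.mulVecLin_apply, hmul,
        if_neg (by omega)]
    have h := this hv
    rw [LinearMap.mem_ker, Matrix.mulVecLin_apply] at h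
    exact h
  rw [eq_bot_iff]
  intro v hv
  rw [Submodule.mem_inf] at hv
  rw [Submodule.mem_bot, ← h1 v hv.1, h2 v hv.2]

/-- Complementarity of the two pure `E`-filtrations. -/
lemma compl_E (i : ℕ) : FE S W rs i ⊓ GG S W rs (i + 1) = ⊥ := by
  set P : Matrix X X ℂ := ∑ k ∈ Finset.range (i + 1), S.EM (rs + k) with hP
  have hmul : ∀ (a : X → ℂ) (k : ℕ), P *ᵥ ((S.EM (rs + k)) *ᵥ a) =
      if k ≤ i then (S.EM (rs + k)) *ᵥ a else 0 := by
    intro a k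
    rw [hP, sum_mulVec']
    have step : ∀ k' ∈ Finset.range (i + 1),
        (S.EM (rs + k')) *ᵥ ((S.EM (rs + k)) *ᵥ a)
          = if k' = k then (S.EM (rs + k)) *ᵥ a else 0 := by
      intro k' _
      rw [Matrix.mulVec_mulVec, S.EM_mul_EM]
      by_cases hkk : k' = k
      · subst hkk
        rw [if_pos rfl, if_pos rfl]
      · rw [if_neg (by omega), if_neg hkk, Matrix.zero_mulVec]
    rw [Finset.sum_congr rfl step, Finset.sum_ite_eq' (Finset.range (i + 1)) k]
    by_cases hk : k ≤ i
    · rw [if_pos (Finset.mem_range.mpr (by omega)), if_pos hk]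
    · rw [if_neg (by simp [Finset.mem_range]; omega), if_neg hk]
  have h1 : ∀ v ∈ FE S W rs i, P *ᵥ v = v := by
    intro v hv
    have : FE S W rs i ≤ LinearMap.ker (P.mulVecLin - LinearMap.id) := by
      refine iSup₂_le fun k hk => ?_
      rintro _ ⟨w, hw, rfl⟩
      rw [LinearMap.mem_ker, LinearMap.sub_apply, LinearMap.id_apply, sub_eq_zero,
        Matrix.mulVecLin_apply, Matrix.mulVecLin_apply, hmul,
        if_pos (by have := Finset.mem_range.mp hk; omega)]
    have h := this hv
    rw [LinearMap.mem_ker, LinearMap.sub_apply, LinearMap.id_apply, sub_eq_zero,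
      Matrix.mulVecLin_apply] at h
    exact h
  have h2 : ∀ v ∈ GG S W rs (i + 1), P *ᵥ v = 0 := by
    intro v hv
    have : GG S W rs (i + 1) ≤ LinearMap.ker P.mulVecLin := by
      refine iSup_le fun k => iSup_le fun hk => ?_
      rintro _ ⟨w, hw, rfl⟩
      rw [LinearMap.mem_ker, Matrix.mulVecLin_apply, Matrix.mulVecLin_apply, hmul,
        if_neg (by omega)]
    have h := this hv
    rw [LinearMap.mem_ker, Matrix.mulVecLin_apply] at h
    exact h
  rw [eq_bot_iff]
  intro v hv
  rw [Submodule.mem_inf] at hv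
  rw [Submodule.mem_bot, ← h1 v hv.1, h2 v hv.2]

/-- The two pure `E^*`-filtrations fill out `W`. -/
lemma sup_star (hT : S.IsTSub x W)
    (hrmin : ∀ m, m < r → Submodule.map (S.Estar x m).mulVecLin W = ⊥) (i : ℕ) :
    FF S x W r i ⊔ GE S x W r (i + 1) = W := by
  refine le_antisymm (sup_le (S.FF_le_W x W r hT i) (S.GE_le_W x W r hT (i + 1))) ?_
  refine S.span_MS x W r hrmin _ fun k => ?_
  by_cases hk : k ≤ i
  · exact le_sup_of_le_left (S.MS_le_FF x W r hk)
  · exact le_sup_of_le_right (S.MS_le_GE x W r (by omega))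

/-- The two pure `E`-filtrations fill out `W`. -/
lemma sup_E (hT : S.IsTSub x W)
    (hrmin : ∀ m, m < rs → Submodule.map (S.EM m).mulVecLin W = ⊥) (i : ℕ) :
    FE S W rs i ⊔ GG S W rs (i + 1) = W := by
  refine le_antisymm (sup_le (S.FE_le_W x W rs hT i) (S.GG_le_W x W rs hT (i + 1))) ?_
  refine S.span_ME W rs hrmin _ fun k => ?_
  by_cases hk : k ≤ i
  · exact le_sup_of_le_left (S.ME_le_FE W rs hk)
  · exact le_sup_of_le_right (S.ME_le_GG W rs (by omega))

end AssocScheme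
namespace AssocScheme

variable {X : Type*} [Fintype X] [DecidableEq X] {D : ℕ} (S : AssocScheme X D) (x : X)
  (W : Submodule ℂ (X → ℂ))

set_option maxHeartbeats 1000000 in
lemma split1 (hmet : S.IsMetric) (hcom : S.IsCometric) (hW : S.IsIrr x W)
    (hX : (Fintype.card X : ℂ) ≠ 0) (i : ℕ) :
    FF S x W (S.endpoint x W) i ⊔ GG S W (S.dualEndpoint W) (i + 1) = W := by
  set r := S.endpoint x W with hr
  set rs := S.dualEndpoint W with hrs
  clear_value r rs
  have hT := hW.1
  have hne := hW.2.1
  have hrmin := S.endpoint_min x W hne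
  have hrsmin := S.dualEndpoint_min W hne
  have hrmem := S.endpoint_mem x W hne
  have hrsmem := S.dualEndpoint_mem W hne
  rw [← hr] at hrmin hrmem
  rw [← hrs] at hrsmin hrsmem
  have hA1 : ∀ (h : ℕ) (u : X → ℂ), u ∈ FF S x W r h ⊓ GG S W rs h →
      (S.A 1).mulVec u ∈
        (FF S x W r h ⊓ GG S W rs h) ⊔ (FF S x W r (h + 1) ⊓ GG S W rs (h + 1)) := by
    intro h u hu
    obtain ⟨c, hcEM⟩ := S.A1_mul_EM (rs + h)
    set L : (X → ℂ) →ₗ[ℂ] (X → ℂ) := (S.A 1).mulVecLin - c • LinearMap.id with hL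
    have hLapp : ∀ v : X → ℂ, L v = (S.A 1).mulVec v - c • v := fun v => rfl
    have hFle : FF S x W r h ≤ Submodule.comap L (FF S x W r (h + 1)) := by
      refine iSup₂_le fun k hk => ?_
      intro v hv
      have hk' : k ≤ h := by have := Finset.mem_range.mp hk; omega
      rw [Submodule.mem_comap, hLapp]
      have h3 := S.A1_tridiag x W hT hmet r hrmin k hv
      have hin : (S.A 1).mulVec v ∈ FF S x W r (h + 1) :=
        (sup_le (sup_le (S.MS_le_FF x W r (by omega)) (S.MS_le_FF x W r (by omega)))
          (S.MS_le_FF x W r (by omega))) h3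
      exact sub_mem hin (Submodule.smul_mem _ c (S.MS_le_FF x W r (by omega) hv))
    have hGle : GG S W rs h ≤ Submodule.comap L (GG S W rs (h + 1)) := by
      refine iSup_le fun ℓ => iSup_le fun hℓ => ?_
      intro v hv
      rw [Submodule.mem_comap, hLapp]
      rcases eq_or_lt_of_le hℓ with heq | hlt
      · rw [← heq] at hv
        rw [S.A1_eigen W hcEM hv, sub_self]
        exact zero_mem _
      · obtain ⟨c', hc'⟩ := S.A1_mul_EM (rs + ℓ)
        rw [S.A1_eigen W hc' hv]
        exact S.ME_le_GG W rs (by omega)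
          (sub_mem (Submodule.smul_mem _ _ hv) (Submodule.smul_mem _ _ hv))
    obtain ⟨hu1, hu2⟩ := Submodule.mem_inf.mp hu
    have hLu : L u ∈ FF S x W r (h + 1) ⊓ GG S W rs (h + 1) :=
      Submodule.mem_inf.mpr ⟨Submodule.mem_comap.mp (hFle hu1), Submodule.mem_comap.mp (hGle hu2)⟩
    have hdecomp : (S.A 1).mulVec u = L u + c • u := by
      rw [hLapp]; rw [sub_add_cancel]
    rw [hdecomp]
    exact add_mem (Submodule.mem_sup_right hLu)
      (Submodule.mem_sup_left (Submodule.smul_mem _ _ hu))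
  have hA2 : ∀ (h : ℕ) (u : X → ℂ), u ∈ FF S x W r h ⊓ GG S W rs h →
      (S.Astar x 1).mulVec u ∈
        (FF S x W r (h - 1) ⊓ GG S W rs (h - 1)) ⊔ (FF S x W r h ⊓ GG S W rs h) := by
    intro h u hu
    obtain ⟨cs, hcs⟩ := S.Astar1_mul_Estar x (r + h)
    set L : (X → ℂ) →ₗ[ℂ] (X → ℂ) := (S.Astar x 1).mulVecLin - cs • LinearMap.id with hL
    have hLapp : ∀ v : X → ℂ, L v = (S.Astar x 1).mulVec v - cs • v := fun v => rfl
    have hFle : FF S x W r h ≤ Submodule.comap L (FF S x W r (h - 1)) := by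
      refine iSup₂_le fun k hk => ?_
      intro v hv
      have hk' : k ≤ h := by have := Finset.mem_range.mp hk; omega
      rw [Submodule.mem_comap, hLapp]
      rcases eq_or_lt_of_le hk' with heq | hlt
      · rw [heq] at hv
        rw [S.Astar1_eigen x W hcs hv, sub_self]
        exact zero_mem _
      · obtain ⟨cs', hcs'⟩ := S.Astar1_mul_Estar x (r + k)
        rw [S.Astar1_eigen x W hcs' hv]
        exact S.MS_le_FF x W r (by omega)
          (sub_mem (Submodule.smul_mem _ _ hv) (Submodule.smul_mem _ _ hv))
    have hGle : GG S W rs h ≤ Submodule.comap L (GG S W rs (h - 1)) := by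
      refine iSup_le fun ℓ => iSup_le fun hℓ => ?_
      intro v hv
      rw [Submodule.mem_comap, hLapp]
      have h3 := S.Astar1_tridiag x W hT hcom rs hrsmin ℓ hv
      have hin : (S.Astar x 1).mulVec v ∈ GG S W rs (h - 1) :=
        (sup_le (sup_le (S.ME_le_GG W rs (by omega)) (S.ME_le_GG W rs (by omega)))
          (S.ME_le_GG W rs (by omega))) h3
      exact sub_mem hin (Submodule.smul_mem _ _ (S.ME_le_GG W rs (by omega) hv))
    obtain ⟨hu1, hu2⟩ := Submodule.mem_inf.mp hu
    have hLu : L u ∈ FF S x W r (h - 1) ⊓ GG S W rs (h - 1) :=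
      Submodule.mem_inf.mpr ⟨Submodule.mem_comap.mp (hFle hu1), Submodule.mem_comap.mp (hGle hu2)⟩
    have hdecomp : (S.Astar x 1).mulVec u = L u + cs • u := by
      rw [hLapp]; rw [sub_add_cancel]
    rw [hdecomp]
    exact add_mem (Submodule.mem_sup_left hLu)
      (Submodule.mem_sup_right (Submodule.smul_mem _ _ hu))
  have hUle : (⨆ h : ℕ, (FF S x W r h ⊓ GG S W rs h)) ≤ W :=
    iSup_le fun h => inf_le_left.trans (S.FF_le_W x W r hT h)
  have hinv1 : ∀ v ∈ (⨆ h : ℕ, (FF S x W r h ⊓ GG S W rs h)),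
      (S.A 1).mulVec v ∈ (⨆ h : ℕ, (FF S x W r h ⊓ GG S W rs h)) := by
    intro v hv
    refine Submodule.iSup_induction' (p := fun h => FF S x W r h ⊓ GG S W rs h)
      (motive := fun v _ => (S.A 1).mulVec v ∈ (⨆ h : ℕ, (FF S x W r h ⊓ GG S W rs h)))
      ?_ ?_ ?_ hv
    · intro h u hu
      exact (sup_le (le_iSup _ h) (le_iSup _ (h + 1)) :
        _ ⊔ _ ≤ ⨆ h : ℕ, (FF S x W r h ⊓ GG S W rs h)) (hA1 h u hu)
    · show (S.A 1) *ᵥ (0 : X → ℂ) ∈ _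
      rw [Matrix.mulVec_zero]; exact zero_mem _
    · intro a b _ _ ha hb
      show (S.A 1) *ᵥ (a + b) ∈ _
      rw [Matrix.mulVec_add]; exact add_mem ha hb
  have hinv2 : ∀ v ∈ (⨆ h : ℕ, (FF S x W r h ⊓ GG S W rs h)),
      (S.Astar x 1).mulVec v ∈ (⨆ h : ℕ, (FF S x W r h ⊓ GG S W rs h)) := by
    intro v hv
    refine Submodule.iSup_induction' (p := fun h => FF S x W r h ⊓ GG S W rs h)
      (motive := fun v _ => (S.Astar x 1).mulVec v ∈ (⨆ h : ℕ, (FF S x W r h ⊓ GG S W rs h)))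
      ?_ ?_ ?_ hv
    · intro h u hu
      exact (sup_le (le_iSup _ (h - 1)) (le_iSup _ h) :
        _ ⊔ _ ≤ ⨆ h : ℕ, (FF S x W r h ⊓ GG S W rs h)) (hA2 h u hu)
    · show (S.Astar x 1) *ᵥ (0 : X → ℂ) ∈ _
      rw [Matrix.mulVec_zero]; exact zero_mem _
    · intro a b _ _ ha hb
      show (S.Astar x 1) *ᵥ (a + b) ∈ _
      rw [Matrix.mulVec_add]; exact add_mem ha hb
  have hstab := S.Talg_le_stab x hmet hcom hX _ hinv1 hinv2
  have hTsubU : S.IsTSub x (⨆ h : ℕ, (FF S x W r h ⊓ GG S W rs h)) :=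
    fun F hF v hv => hstab hF v hv
  have hGG0 : W ≤ GG S W rs 0 :=
    S.span_ME W rs hrsmin _ fun ℓ => S.ME_le_GG W rs (Nat.zero_le ℓ)
  have hU0 : Submodule.map (S.Estar x r).mulVecLin W ≤
      (⨆ h : ℕ, (FF S x W r h ⊓ GG S W rs h)) := by
    have h1 := S.MS_le_FF x W r (le_refl 0)
    rw [Nat.add_zero] at h1
    have h2 : Submodule.map (S.Estar x r).mulVecLin W ≤ GG S W rs 0 :=
      le_trans (S.map_Talg_le x W hT (S.Estar_mem_Talg x r)) hGG0
    exact le_trans (le_inf h1 h2)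
      (le_iSup (fun h => FF S x W r h ⊓ GG S W rs h) 0)
  have hUUne : (⨆ h : ℕ, (FF S x W r h ⊓ GG S W rs h)) ≠ ⊥ := by
    intro hbot
    rw [hbot] at hU0
    exact hrmem (le_bot_iff.mp hU0)
  have hUUW := (hW.2.2 _ hUle hTsubU).resolve_left hUUne
  have hsup : (⨆ h : ℕ, (FF S x W r h ⊓ GG S W rs h)) ≤ FF S x W r i ⊔ GG S W rs (i + 1) := by
    refine iSup_le fun h => ?_
    rcases le_or_gt h i with hh | hh
    · exact le_sup_of_le_left (inf_le_left.trans (S.FF_mono x W r hh))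
    · exact le_sup_of_le_right (inf_le_right.trans (S.GG_anti W rs (by omega)))
  exact le_antisymm (sup_le (S.FF_le_W x W r hT i) (S.GG_le_W x W rs hT (i + 1)))
    (le_trans (le_of_eq hUUW.symm) hsup)

set_option maxHeartbeats 1000000 in
lemma split2 (hmet : S.IsMetric) (hcom : S.IsCometric) (hW : S.IsIrr x W)
    (hX : (Fintype.card X : ℂ) ≠ 0) (i : ℕ) :
    FE S W (S.dualEndpoint W) i ⊔ GE S x W (S.endpoint x W) (i + 1) = W := by
  set r := S.endpoint x W with hr
  set rs := S.dualEndpoint W with hrs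
  clear_value r rs
  have hT := hW.1
  have hne := hW.2.1
  have hrmin := S.endpoint_min x W hne
  have hrsmin := S.dualEndpoint_min W hne
  have hrmem := S.endpoint_mem x W hne
  have hrsmem := S.dualEndpoint_mem W hne
  rw [← hr] at hrmin hrmem
  rw [← hrs] at hrsmin hrsmem
  have hA1 : ∀ (h : ℕ) (u : X → ℂ), u ∈ FE S W rs h ⊓ GE S x W r h →
      (S.Astar x 1).mulVec u ∈
        (FE S W rs h ⊓ GE S x W r h) ⊔ (FE S W rs (h + 1) ⊓ GE S x W r (h + 1)) := by
    intro h u hu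
    obtain ⟨cs, hcs⟩ := S.Astar1_mul_Estar x (r + h)
    set L : (X → ℂ) →ₗ[ℂ] (X → ℂ) := (S.Astar x 1).mulVecLin - cs • LinearMap.id with hL
    have hLapp : ∀ v : X → ℂ, L v = (S.Astar x 1).mulVec v - cs • v := fun v => rfl
    have hFle : FE S W rs h ≤ Submodule.comap L (FE S W rs (h + 1)) := by
      refine iSup₂_le fun ℓ hℓ => ?_
      intro v hv
      have hℓ' : ℓ ≤ h := by have := Finset.mem_range.mp hℓ; omega
      rw [Submodule.mem_comap, hLapp]
      have h3 := S.Astar1_tridiag x W hT hcom rs hrsmin ℓ hv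
      have hin : (S.Astar x 1).mulVec v ∈ FE S W rs (h + 1) :=
        (sup_le (sup_le (S.ME_le_FE W rs (by omega)) (S.ME_le_FE W rs (by omega)))
          (S.ME_le_FE W rs (by omega))) h3
      exact sub_mem hin (Submodule.smul_mem _ _ (S.ME_le_FE W rs (by omega) hv))
    have hGle : GE S x W r h ≤ Submodule.comap L (GE S x W r (h + 1)) := by
      refine iSup_le fun k => iSup_le fun hk => ?_
      intro v hv
      rw [Submodule.mem_comap, hLapp]
      rcases eq_or_lt_of_le hk with heq | hlt
      · rw [← heq] at hv
        rw [S.Astar1_eigen x W hcs hv, sub_self]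
        exact zero_mem _
      · obtain ⟨cs', hcs'⟩ := S.Astar1_mul_Estar x (r + k)
        rw [S.Astar1_eigen x W hcs' hv]
        exact S.MS_le_GE x W r (by omega)
          (sub_mem (Submodule.smul_mem _ _ hv) (Submodule.smul_mem _ _ hv))
    obtain ⟨hu1, hu2⟩ := Submodule.mem_inf.mp hu
    have hLu : L u ∈ FE S W rs (h + 1) ⊓ GE S x W r (h + 1) :=
      Submodule.mem_inf.mpr ⟨Submodule.mem_comap.mp (hFle hu1), Submodule.mem_comap.mp (hGle hu2)⟩
    have hdecomp : (S.Astar x 1).mulVec u = L u + cs • u := by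
      rw [hLapp]; rw [sub_add_cancel]
    rw [hdecomp]
    exact add_mem (Submodule.mem_sup_right hLu)
      (Submodule.mem_sup_left (Submodule.smul_mem _ _ hu))
  have hA2 : ∀ (h : ℕ) (u : X → ℂ), u ∈ FE S W rs h ⊓ GE S x W r h →
      (S.A 1).mulVec u ∈
        (FE S W rs (h - 1) ⊓ GE S x W r (h - 1)) ⊔ (FE S W rs h ⊓ GE S x W r h) := by
    intro h u hu
    obtain ⟨c, hcEM⟩ := S.A1_mul_EM (rs + h)
    set L : (X → ℂ) →ₗ[ℂ] (X → ℂ) := (S.A 1).mulVecLin - c • LinearMap.id with hL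
    have hLapp : ∀ v : X → ℂ, L v = (S.A 1).mulVec v - c • v := fun v => rfl
    have hFle : FE S W rs h ≤ Submodule.comap L (FE S W rs (h - 1)) := by
      refine iSup₂_le fun ℓ hℓ => ?_
      intro v hv
      have hℓ' : ℓ ≤ h := by have := Finset.mem_range.mp hℓ; omega
      rw [Submodule.mem_comap, hLapp]
      rcases eq_or_lt_of_le hℓ' with heq | hlt
      · rw [heq] at hv
        rw [S.A1_eigen W hcEM hv, sub_self]
        exact zero_mem _
      · obtain ⟨c', hc'⟩ := S.A1_mul_EM (rs + ℓ)
        rw [S.A1_eigen W hc' hv]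
        exact S.ME_le_FE W rs (by omega)
          (sub_mem (Submodule.smul_mem _ _ hv) (Submodule.smul_mem _ _ hv))
    have hGle : GE S x W r h ≤ Submodule.comap L (GE S x W r (h - 1)) := by
      refine iSup_le fun k => iSup_le fun hk => ?_
      intro v hv
      rw [Submodule.mem_comap, hLapp]
      have h3 := S.A1_tridiag x W hT hmet r hrmin k hv
      have hin : (S.A 1).mulVec v ∈ GE S x W r (h - 1) :=
        (sup_le (sup_le (S.MS_le_GE x W r (by omega)) (S.MS_le_GE x W r (by omega)))
          (S.MS_le_GE x W r (by omega))) h3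
      exact sub_mem hin (Submodule.smul_mem _ _ (S.MS_le_GE x W r (by omega) hv))
    obtain ⟨hu1, hu2⟩ := Submodule.mem_inf.mp hu
    have hLu : L u ∈ FE S W rs (h - 1) ⊓ GE S x W r (h - 1) :=
      Submodule.mem_inf.mpr ⟨Submodule.mem_comap.mp (hFle hu1), Submodule.mem_comap.mp (hGle hu2)⟩
    have hdecomp : (S.A 1).mulVec u = L u + c • u := by
      rw [hLapp]; rw [sub_add_cancel]
    rw [hdecomp]
    exact add_mem (Submodule.mem_sup_left hLu)
      (Submodule.mem_sup_right (Submodule.smul_mem _ _ hu))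
  have hUle : (⨆ h : ℕ, (FE S W rs h ⊓ GE S x W r h)) ≤ W :=
    iSup_le fun h => inf_le_left.trans (S.FE_le_W x W rs hT h)
  have hinv1 : ∀ v ∈ (⨆ h : ℕ, (FE S W rs h ⊓ GE S x W r h)),
      (S.A 1).mulVec v ∈ (⨆ h : ℕ, (FE S W rs h ⊓ GE S x W r h)) := by
    intro v hv
    refine Submodule.iSup_induction' (p := fun h => FE S W rs h ⊓ GE S x W r h)
      (motive := fun v _ => (S.A 1).mulVec v ∈ (⨆ h : ℕ, (FE S W rs h ⊓ GE S x W r h)))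
      ?_ ?_ ?_ hv
    · intro h u hu
      exact (sup_le (le_iSup _ (h - 1)) (le_iSup _ h) :
        _ ⊔ _ ≤ ⨆ h : ℕ, (FE S W rs h ⊓ GE S x W r h)) (hA2 h u hu)
    · show (S.A 1) *ᵥ (0 : X → ℂ) ∈ _
      rw [Matrix.mulVec_zero]; exact zero_mem _
    · intro a b _ _ ha hb
      show (S.A 1) *ᵥ (a + b) ∈ _
      rw [Matrix.mulVec_add]; exact add_mem ha hb
  have hinv2 : ∀ v ∈ (⨆ h : ℕ, (FE S W rs h ⊓ GE S x W r h)),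
      (S.Astar x 1).mulVec v ∈ (⨆ h : ℕ, (FE S W rs h ⊓ GE S x W r h)) := by
    intro v hv
    refine Submodule.iSup_induction' (p := fun h => FE S W rs h ⊓ GE S x W r h)
      (motive := fun v _ => (S.Astar x 1).mulVec v ∈ (⨆ h : ℕ, (FE S W rs h ⊓ GE S x W r h)))
      ?_ ?_ ?_ hv
    · intro h u hu
      exact (sup_le (le_iSup _ h) (le_iSup _ (h + 1)) :
        _ ⊔ _ ≤ ⨆ h : ℕ, (FE S W rs h ⊓ GE S x W r h)) (hA1 h u hu)
    · show (S.Astar x 1) *ᵥ (0 : X → ℂ) ∈ _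
      rw [Matrix.mulVec_zero]; exact zero_mem _
    · intro a b _ _ ha hb
      show (S.Astar x 1) *ᵥ (a + b) ∈ _
      rw [Matrix.mulVec_add]; exact add_mem ha hb
  have hstab := S.Talg_le_stab x hmet hcom hX _ hinv1 hinv2
  have hTsubU : S.IsTSub x (⨆ h : ℕ, (FE S W rs h ⊓ GE S x W r h)) :=
    fun F hF v hv => hstab hF v hv
  have hGE0 : W ≤ GE S x W r 0 :=
    S.span_MS x W r hrmin _ fun k => S.MS_le_GE x W r (Nat.zero_le k)
  have hU0 : Submodule.map (S.EM rs).mulVecLin W ≤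
      (⨆ h : ℕ, (FE S W rs h ⊓ GE S x W r h)) := by
    have h1 := S.ME_le_FE W rs (le_refl 0)
    rw [Nat.add_zero] at h1
    have h2 : Submodule.map (S.EM rs).mulVecLin W ≤ GE S x W r 0 :=
      le_trans (S.map_Talg_le x W hT (S.EM_mem_Talg x rs)) hGE0
    exact le_trans (le_inf h1 h2)
      (le_iSup (fun h => FE S W rs h ⊓ GE S x W r h) 0)
  have hUUne : (⨆ h : ℕ, (FE S W rs h ⊓ GE S x W r h)) ≠ ⊥ := by
    intro hbot
    rw [hbot] at hU0
    exact hrsmem (le_bot_iff.mp hU0)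
  have hUUW := (hW.2.2 _ hUle hTsubU).resolve_left hUUne
  have hsup : (⨆ h : ℕ, (FE S W rs h ⊓ GE S x W r h)) ≤ FE S W rs i ⊔ GE S x W r (i + 1) := by
    refine iSup_le fun h => ?_
    rcases le_or_gt h i with hh | hh
    · exact le_sup_of_le_left (inf_le_left.trans (S.FE_mono W rs hh))
    · exact le_sup_of_le_right (inf_le_right.trans (S.GE_anti x W r (by omega)))
  exact le_antisymm (sup_le (S.FE_le_W x W rs hT i) (S.GE_le_W x W r hT (i + 1)))
    (le_trans (le_of_eq hUUW.symm) hsup)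

end AssocScheme
open AssocScheme in
/-- **Ito–Tanabe–Terwilliger.** Let `W` be an irreducible `T(x)`-module of
a metric and cometric symmetric association scheme, with endpoint `r`, dual endpoint
`r^*`, and diameter `d`.  For `0 ≤ i, j ≤ d` set
`W_{ij} = (Σ_{k=0}^{i} E_{r+k}^* W) ∩ (Σ_{ℓ=j}^{d} E_{r^*+ℓ} W)` and
`W_{ij}^* = (Σ_{ℓ=0}^{i} E_{r^*+ℓ} W) ∩ (Σ_{k=j}^{d} E_{r+k}^* W)`.
Then `W_{ij} = W_{ij}^* = 0` whenever `i < j`. -/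
theorem ito_tanabe_terwilliger
    {X : Type*} [Fintype X] [DecidableEq X] {D : ℕ}
    (S : AssocScheme X D) (hm : S.IsMetric) (hc : S.IsCometric)
    (x : X) (W : Submodule ℂ (X → ℂ)) (hW : S.IsIrr x W) :
    ∀ i j : ℕ, i ≤ S.diam x W → j ≤ S.diam x W → i < j →
      ((⨆ k ∈ Finset.range (i + 1),
          Submodule.map (S.Estar x (S.endpoint x W + k)).mulVecLin W) ⊓
        (⨆ l ∈ Finset.Icc j (S.diam x W),
          Submodule.map (S.EM (S.dualEndpoint W + l)).mulVecLin W) = ⊥) ∧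
      ((⨆ l ∈ Finset.range (i + 1),
          Submodule.map (S.EM (S.dualEndpoint W + l)).mulVecLin W) ⊓
        (⨆ k ∈ Finset.Icc j (S.diam x W),
          Submodule.map (S.Estar x (S.endpoint x W + k)).mulVecLin W) = ⊥) := by
  intro i j _ _ hij
  have hT := hW.1
  have hne := hW.2.1
  have hX : (Fintype.card X : ℂ) ≠ 0 := by
    have hnonempty : Nonempty X := by
      by_contra hempty
      haveI : IsEmpty X := not_nonempty_iff.mp hempty
      exact hne (Submodule.eq_bot_of_subsingleton)
    exact Nat.cast_ne_zero.mpr Fintype.card_ne_zero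
  set r := S.endpoint x W with hr
  set rs := S.dualEndpoint W with hrs
  clear_value r rs
  have hrmin := S.endpoint_min x W hne
  have hrsmin := S.dualEndpoint_min W hne
  rw [← hr] at hrmin
  rw [← hrs] at hrsmin
  have h1 := S.split1 x W hm hc hW hX i
  have h2 := S.split2 x W hm hc hW hX i
  rw [← hr, ← hrs] at h1 h2
  have h3 := S.compl_star x W r i
  have h4 := S.compl_E W rs i
  have h5 := S.sup_star x W r hT hrmin i
  have h6 := S.sup_E x W rs hT hrsmin i
  have e1 := Submodule.finrank_sup_add_finrank_inf_eq (FF S x W r i) (GE S x W r (i + 1))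
  have e2 := Submodule.finrank_sup_add_finrank_inf_eq (FE S W rs i) (GG S W rs (i + 1))
  have e3 := Submodule.finrank_sup_add_finrank_inf_eq (FF S x W r i) (GG S W rs (i + 1))
  have e4 := Submodule.finrank_sup_add_finrank_inf_eq (FE S W rs i) (GE S x W r (i + 1))
  rw [h5, h3, finrank_bot] at e1
  rw [h6, h4, finrank_bot] at e2
  rw [h1] at e3
  rw [h2] at e4
  have hz1 : Module.finrank ℂ ↥(FF S x W r i ⊓ GG S W rs (i + 1)) = 0 := by omega
  have hz2 : Module.finrank ℂ ↥(FE S W rs i ⊓ GE S x W r (i + 1)) = 0 := by omega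
  have hb1 : FF S x W r i ⊓ GG S W rs (i + 1) = ⊥ := Submodule.finrank_eq_zero.mp hz1
  have hb2 : FE S W rs i ⊓ GE S x W r (i + 1) = ⊥ := Submodule.finrank_eq_zero.mp hz2
  constructor
  · have hle2 : (⨆ l ∈ Finset.Icc j (S.diam x W),
        Submodule.map (S.EM (rs + l)).mulVecLin W) ≤ GG S W rs (i + 1) :=
      iSup₂_le fun ℓ hℓ => S.ME_le_GG W rs (by have := Finset.mem_Icc.mp hℓ; omega)
    exact le_bot_iff.mp (le_trans (inf_le_inf (le_of_eq rfl) hle2) (le_of_eq hb1))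
  · have hle2 : (⨆ k ∈ Finset.Icc j (S.diam x W),
        Submodule.map (S.Estar x (r + k)).mulVecLin W) ≤ GE S x W r (i + 1) :=
      iSup₂_le fun k hk => S.MS_le_GE x W r (by have := Finset.mem_Icc.mp hk; omega)
    exact le_bot_iff.mp (le_trans (inf_le_inf (le_of_eq rfl) hle2) (le_of_eq hb2))
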